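/- Let ℓ ≥ 1 and A ∈ GL₂(𝔬_ℓ). Then A is real in GL₂(𝔬_ℓ) if and only if A is conjugate in GL₂(𝔬_ℓ) to a matrix of one of the following forms: (a) [[0,1],[1,0]]; (b) [[0,−1],[1,β]] for some β ∈ 𝔬_ℓ; (c) I + π^i·[[0,α],[1,π^i α]] for some 1 ≤ i ≤ ℓ and α ∈ 𝔬_ℓ; (d) −I + π^i·[[0,α],[1,−π^i α]] for some 1 ≤ i ≤ ℓ and α ∈ 𝔬_ℓ (here π^ℓ = 0 in 𝔬_ℓ, so i = ℓ yields ±I). -/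

import Mathlib

/-!
Conjugation preserves trace and determinant, and `A⁻¹ = det(A)⁻¹ • adj A` has trace
`tr A / det A`; so a real `A` has `det A = ±1`, and trace `0` when `det A = -1` (as `2` is a unit).
If `A` is not scalar modulo `π`, one of `e₁`, `e₂`, `e₁ + e₂` is a cyclic vector `v`, and in the
basis `(v, A v)` the matrix `A` becomes its companion matrix: this gives (a) and (b).
Otherwise write `A = c + π ^ i B` with `i` maximal. Then `det A = 1`, `c ≡ ±1 mod π ^ i`, and for
`i < ℓ` the matrix `B` is not scalar modulo `π`, so conjugating `B` to its companion matrix gives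
(c) or (d), the lower right entry being forced by `det A = 1`.
Conversely, each normal form `N` satisfies `h N h = N⁻¹` for an explicit `h` with `h ^ 2 = 1`.
-/

open Matrix IsLocalRing

local notation "M₂" => Matrix (Fin 2) (Fin 2)

theorem isConj_inv_of_conj {G : Type*} [Group G] {g x : G}
    (h : IsConj (g * x * g⁻¹) (g * x * g⁻¹)⁻¹) : IsConj x x⁻¹ :=
  (isConj_iff.mpr ⟨g, rfl⟩).trans (h.trans (isConj_iff.mpr ⟨g⁻¹, by group⟩))

section CommRing

variable {R : Type*} [CommRing R]

theorem det_mul_self_eq_one_of_isConj_inv {n : Type*} [Fintype n] [DecidableEq n]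
    {A : GL n R} (h : IsConj A A⁻¹) : (A : Matrix n n R).det * (A : Matrix n n R).det = 1 := by
  have hdet : GeneralLinearGroup.det A = GeneralLinearGroup.det A⁻¹ :=
    isConj_iff_eq.mp (GeneralLinearGroup.det.map_isConj h)
  simpa using congrArg Units.val (mul_eq_one_iff_eq_inv.mpr (hdet.trans (map_inv _ A)))

theorem det_mul_trace_eq_trace_of_isConj_inv {A : GL (Fin 2) R} (h : IsConj A A⁻¹) :
    (A : M₂ R).det * (A : M₂ R).trace = (A : M₂ R).trace := by
  obtain ⟨g, hg⟩ := isConj_iff.mp h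
  have htrace_inv : trace (↑A⁻¹ : M₂ R) = trace (A : M₂ R) := by
    rw [← hg, Units.val_mul, Units.val_mul, trace_units_conj]
  have hadj : adjugate (A : M₂ R) = (A : M₂ R).det • ↑A⁻¹ := by
    calc adjugate (A : M₂ R)
        = ↑A⁻¹ * (↑A * adjugate (A : M₂ R)) := by
          rw [← Matrix.mul_assoc, ← Units.val_mul, inv_mul_cancel, Units.val_one, Matrix.one_mul]
      _ = _ := by rw [mul_adjugate, Matrix.mul_smul, Matrix.mul_one]
  calc _ = trace (adjugate (A : M₂ R)) := by rw [hadj, trace_smul, smul_eq_mul, htrace_inv]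
    _ = _ := by simp [adjugate_fin_two, trace_fin_two, add_comm]

theorem isConj_inv_of_mul_self_eq_one {n : Type*} [Fintype n] [DecidableEq n] {N : GL n R}
    {h : Matrix n n R} (hh : h * h = 1)
    (hN : h * (N : Matrix n n R) * h * (N : Matrix n n R) = 1) : IsConj N N⁻¹ :=
  isConj_iff.mpr ⟨⟨h, h, hh, hh⟩, eq_inv_of_mul_eq_one_left (Units.ext hN)⟩

theorem isConj_inv_of_val_eq_swap {N : GL (Fin 2) R} (hN : (N : M₂ R) = !![0, 1; 1, 0]) :
    IsConj N N⁻¹ := by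
  refine isConj_inv_of_mul_self_eq_one (Matrix.one_mul 1) ?_
  rw [Matrix.mul_one, Matrix.one_mul, hN, mul_fin_two, one_fin_two]
  norm_num

theorem isConj_inv_of_val_eq_companion {N : GL (Fin 2) R} {β : R}
    (hN : (N : M₂ R) = !![0, -1; 1, β]) : IsConj N N⁻¹ := by
  refine isConj_inv_of_mul_self_eq_one (h := !![1, β; 0, -1]) ?_ ?_ <;>
    simp only [hN, mul_fin_two, one_fin_two, EmbeddingLike.apply_eq_iff_eq, vecCons_inj,
      and_true] <;>
    refine ⟨⟨?_, ?_⟩, ?_, ?_⟩ <;> ring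

theorem isConj_inv_of_val_eq_smul_one_add_smul {N : GL (Fin 2) R} {ε q α : R} (hε : ε * ε = 1)
    (hN : (N : M₂ R) = ε • 1 + q • !![0, α; 1, ε * (q * α)]) : IsConj N N⁻¹ := by
  have hN_entries : (N : M₂ R) = !![ε, q * α; q, ε + q * (ε * (q * α))] := by
    rw [hN, one_fin_two, smul_of, smul_of]
    simp
  refine isConj_inv_of_mul_self_eq_one (h := !![1, ε * (q * α); 0, -1]) ?_ ?_ <;>
    simp only [hN_entries, mul_fin_two, one_fin_two, EmbeddingLike.apply_eq_iff_eq, vecCons_inj,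
      and_true] <;>
    refine ⟨⟨?_, ?_⟩, ?_, ?_⟩
  all_goals first | linear_combination (1 + q ^ 2 * α) * hε | ring

theorem mul_cyclic_eq_mul_companion (M : M₂ R) (v : Fin 2 → R) :
    M * (of ![v, M *ᵥ v])ᵀ = (of ![v, M *ᵥ v])ᵀ * !![0, -M.det; 1, M.trace] := by
  ext i j
  fin_cases i <;> fin_cases j <;>
    simp only [mul_apply, Fin.sum_univ_two, transpose_apply, of_apply, mulVec_fin_two, det_fin_two,
      trace_fin_two, cons_val_zero, cons_val_one, Fin.zero_eta, Fin.mk_one] <;> ring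

theorem exists_conj_eq_companion (M : M₂ R) (v : Fin 2 → R)
    (hv : IsUnit (of ![v, M *ᵥ v]).det) :
    ∃ g : GL (Fin 2) R, (g : M₂ R) * M * (↑g⁻¹ : M₂ R) = !![0, -M.det; 1, M.trace] := by
  set P := (of ![v, M *ᵥ v])ᵀ
  have hP : IsUnit P.det := by rwa [det_transpose]
  refine ⟨(GeneralLinearGroup.mk'' P hP)⁻¹, ?_⟩
  rw [Matrix.coe_units_inv, inv_inv, GeneralLinearGroup.val_mk'', Matrix.mul_assoc,
    mul_cyclic_eq_mul_companion, ← Matrix.mul_assoc, nonsing_inv_mul _ hP, Matrix.one_mul]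

theorem units_conj_smul_one_add_smul {n : Type*} [Fintype n] [DecidableEq n]
    (g : GL n R) (c q : R) (B : Matrix n n R) :
    (g : Matrix n n R) * (c • 1 + q • B) * (↑g⁻¹ : Matrix n n R) =
      c • 1 + q • ((g : Matrix n n R) * B * (↑g⁻¹ : Matrix n n R)) := by
  rw [Matrix.mul_add, Matrix.add_mul, Matrix.mul_smul, Matrix.smul_mul, Matrix.mul_one,
    Units.mul_inv, Matrix.mul_smul, Matrix.smul_mul]

theorem det_smul_one_add_smul (c q : R) (B : M₂ R) :
    (c • 1 + q • B).det = c * c + q * (c * B.trace + q * B.det) := by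
  simp only [det_fin_two, trace_fin_two, Matrix.add_apply, Matrix.smul_apply, smul_eq_mul,
    one_apply_eq, one_apply_ne Fin.zero_ne_one, one_apply_ne Fin.zero_ne_one.symm]
  ring

theorem trace_smul_one_add_smul (c q : R) (B : M₂ R) :
    (c • 1 + q • B).trace = 2 * c + q * B.trace := by
  simp [mul_comm]

section IsScalarMod

variable {n : Type*} [DecidableEq n]

def IsScalarMod (q : R) (M : Matrix n n R) : Prop :=
  ∃ (c : R) (B : Matrix n n R), M = c • 1 + q • B

theorem IsScalarMod.add_smul_one {q : R} {M : Matrix n n R} (h : IsScalarMod q M) (c : R) :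
    IsScalarMod q (M + c • 1) := by
  obtain ⟨c', B, rfl⟩ := h
  exact ⟨c' + c, B, by module⟩

theorem exists_maximal_isScalarMod_pow (q : R) (M : Matrix n n R) {k ℓ : ℕ} (hkℓ : k ≤ ℓ)
    (hk : IsScalarMod (q ^ k) M) :
    ∃ i, k ≤ i ∧ i ≤ ℓ ∧ ∃ (c : R) (B : Matrix n n R), M = c • 1 + q ^ i • B ∧
      (i < ℓ → ¬ IsScalarMod q B) := by
  classical
  set i := Nat.findGreatest (fun j => IsScalarMod (q ^ j) M) ℓ
  obtain ⟨c, B, hM⟩ : IsScalarMod (q ^ i) M :=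
    Nat.findGreatest_spec (P := fun j => IsScalarMod (q ^ j) M) hkℓ hk
  refine ⟨i, Nat.le_findGreatest hkℓ hk, Nat.findGreatest_le ℓ, c, B, hM, ?_⟩
  rintro hiℓ ⟨c', B', rfl⟩
  refine Nat.findGreatest_is_greatest (Nat.lt_succ_self i) hiℓ ⟨c + q ^ i * c', B', ?_⟩
  rw [hM, pow_succ]
  module

end IsScalarMod

theorem dvd_det_of_isScalarMod (h2 : IsUnit (2 : R)) {p : R} {M : M₂ R}
    (hM : IsScalarMod p M) (htr : M.trace = 0) : p ∣ M.det := by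
  obtain ⟨c, B, rfl⟩ := hM
  have hc : p ∣ c := by
    rw [← h2.dvd_mul_left]
    exact ⟨-B.trace, by linear_combination htr - trace_smul_one_add_smul c p B⟩
  rw [det_smul_one_add_smul]
  exact dvd_add (dvd_mul_of_dvd_left hc c) (dvd_mul_right p _)

section IsLocalRing

variable [IsLocalRing R]

theorem exists_sub_mem_of_mul_self_sub_one_mem (h2 : IsUnit (2 : R)) {I : Ideal R} {c : R}
    (h : c * c - 1 ∈ I) : ∃ ε : R, (ε = 1 ∨ ε = -1) ∧ c - ε ∈ I := by
  have hsum : (c + 1) + -(c - 1) = 2 := by ring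
  rcases isUnit_or_isUnit_of_isUnit_add (hsum ▸ h2) with hu | hu
  · refine ⟨1, Or.inl rfl, (Ideal.mul_unit_mem_iff_mem I hu).mp ?_⟩
    convert h using 1
    ring
  · refine ⟨-1, Or.inr rfl, (Ideal.mul_unit_mem_iff_mem I hu).mp ?_⟩
    convert I.neg_mem h using 1
    ring

theorem eq_one_or_eq_neg_one_of_mul_self_eq_one (h2 : IsUnit (2 : R)) {c : R}
    (h : c * c = 1) : c = 1 ∨ c = -1 := by
  obtain ⟨ε, hε, hcε⟩ := exists_sub_mem_of_mul_self_sub_one_mem h2 (I := ⊥)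
    (by rw [h, sub_self]; exact Submodule.zero_mem _)
  rwa [sub_eq_zero.mp ((Submodule.mem_bot R).mp hcε)]

variable {p : R}

theorem dvd_of_not_isUnit (hp : maximalIdeal R = Ideal.span {p}) {x : R} (hx : ¬ IsUnit x) :
    p ∣ x := by
  rw [← Ideal.mem_span_singleton, ← hp]
  exact hx

theorem exists_conj_eq_companion_of_not_isScalarMod (hp : maximalIdeal R = Ideal.span {p})
    {M : M₂ R} (hM : ¬ IsScalarMod p M) :
    ∃ g : GL (Fin 2) R, (g : M₂ R) * M * (↑g⁻¹ : M₂ R) = !![0, -M.det; 1, M.trace] := by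
  by_cases hc : IsUnit (M 1 0)
  · refine exists_conj_eq_companion M ![1, 0] ?_
    rw [mulVec_fin_two, det_fin_two_of]
    simpa using hc
  by_cases hb : IsUnit (M 0 1)
  · refine exists_conj_eq_companion M ![0, 1] ?_
    rw [mulVec_fin_two, det_fin_two_of]
    simpa using hb.neg
  have had : IsUnit (M 1 1 - M 0 0) := by
    by_contra had
    obtain ⟨b, hb⟩ := dvd_of_not_isUnit hp hb
    obtain ⟨c, hc⟩ := dvd_of_not_isUnit hp hc
    obtain ⟨d, hd⟩ := dvd_of_not_isUnit hp had
    refine hM ⟨M 0 0, !![0, b; c, d], ?_⟩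
    ext i j
    fin_cases i <;> fin_cases j <;> simp [hb, hc, eq_add_of_sub_eq' hd]
  refine exists_conj_eq_companion M ![1, 1] ?_
  have hdet : (of ![![1, 1], M *ᵥ ![1, 1]]).det = (M 1 1 - M 0 0) + (M 1 0 - M 0 1) := by
    rw [mulVec_fin_two, det_fin_two_of]
    simp only [cons_val_zero, cons_val_one]
    ring
  have hcb : M 1 0 - M 0 1 ∈ maximalIdeal R := sub_mem hc hb
  rw [hdet, ← notMem_maximalIdeal, Ideal.add_mem_iff_left _ hcb]
  exact notMem_maximalIdeal.mpr had

theorem exists_conj_eq_smul_one_add_pow_smul (hp : maximalIdeal R = Ideal.span {p}) {ε : R}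
    (hε : ε * ε = 1) (i : ℕ) {B : M₂ R} (hB : ¬ IsScalarMod p B)
    (hdet : (ε • 1 + p ^ i • B).det = 1) :
    ∃ (g : GL (Fin 2) R) (α : R), (g : M₂ R) * (ε • 1 + p ^ i • B) * (↑g⁻¹ : M₂ R) =
      ε • 1 + p ^ i • !![0, α; 1, ε * (p ^ i * α)] := by
  obtain ⟨g, hg⟩ := exists_conj_eq_companion_of_not_isScalarMod hp hB
  refine ⟨g, -B.det, ?_⟩
  rw [units_conj_smul_one_add_smul, hg]
  rw [det_smul_one_add_smul] at hdet
  have htr : p ^ i * B.trace = p ^ i * (ε * (p ^ i * -B.det)) := by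
    linear_combination ε * hdet - (ε + p ^ i * B.trace) * hε
  ext i j
  fin_cases i <;> fin_cases j <;> simp [htr]

theorem exists_conj_eq_smul_one_add_pow_smul_of_isScalarMod
    (hp : maximalIdeal R = Ideal.span {p}) (h2 : IsUnit (2 : R)) {ℓ : ℕ} (hpℓ : p ^ ℓ = 0)
    {A : GL (Fin 2) R} (hA : IsScalarMod p (A : M₂ R)) (hdet : (A : M₂ R).det = 1) :
    ∃ (g : GL (Fin 2) R) (ε : R), (ε = 1 ∨ ε = -1) ∧ ∃ i, 1 ≤ i ∧ i ≤ ℓ ∧ ∃ α : R,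
      (↑(g * A * g⁻¹) : M₂ R) = ε • 1 + p ^ i • !![0, α; 1, ε * (p ^ i * α)] := by
  have hℓ : 1 ≤ ℓ := by
    refine Nat.one_le_iff_ne_zero.mpr ?_
    rintro rfl
    exact one_ne_zero (pow_zero p ▸ hpℓ)
  obtain ⟨i, hi1, hiℓ, c, B, hAB, hB⟩ :=
    exists_maximal_isScalarMod_pow p (A : M₂ R) hℓ (by rwa [pow_one])
  have hc : c * c - 1 ∈ Ideal.span {p ^ i} := by
    rw [hAB, det_smul_one_add_smul] at hdet
    exact Ideal.mem_span_singleton'.mpr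
      ⟨-(c * B.trace + p ^ i * B.det), by linear_combination -hdet⟩
  obtain ⟨ε, hε, hcε⟩ := exists_sub_mem_of_mul_self_sub_one_mem h2 hc
  obtain ⟨w, hw⟩ := Ideal.mem_span_singleton.mp hcε
  have hA' : (A : M₂ R) = ε • 1 + p ^ i • (B + w • 1) := by
    rw [hAB, eq_add_of_sub_eq hw]
    module
  have hεε : ε * ε = 1 := by rcases hε with rfl | rfl <;> ring
  rcases hiℓ.lt_or_eq with hiℓ | rfl
  · obtain ⟨g, α, hg⟩ := exists_conj_eq_smul_one_add_pow_smul hp hεε i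
      (fun h => hB hiℓ (by simpa using h.add_smul_one (-w))) (hA' ▸ hdet)
    exact ⟨g, ε, hε, i, hi1, hiℓ.le, α, by rw [Units.val_mul, Units.val_mul, hA', hg]⟩
  · exact ⟨1, ε, hε, i, hi1, le_rfl, 0, by simp [hA', hpℓ]⟩

theorem isConj_inv_iff_exists_conj_eq (hp : maximalIdeal R = Ideal.span {p})
    (h2 : IsUnit (2 : R)) {ℓ : ℕ} (hpℓ : p ^ ℓ = 0) (A : GL (Fin 2) R) :
    IsConj A A⁻¹ ↔ ∃ g : GL (Fin 2) R,
      (↑(g * A * g⁻¹) : M₂ R) = !![0, 1; 1, 0] ∨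
      (∃ β : R, (↑(g * A * g⁻¹) : M₂ R) = !![0, -1; 1, β]) ∨
      (∃ i : ℕ, 1 ≤ i ∧ i ≤ ℓ ∧ ∃ α : R,
        (↑(g * A * g⁻¹) : M₂ R) = 1 + p ^ i • !![0, α; 1, p ^ i * α]) ∨
      (∃ i : ℕ, 1 ≤ i ∧ i ≤ ℓ ∧ ∃ α : R,
        (↑(g * A * g⁻¹) : M₂ R) = -1 + p ^ i • !![0, α; 1, -(p ^ i * α)]) := by
  constructor
  · intro hA
    have hdet := eq_one_or_eq_neg_one_of_mul_self_eq_one h2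
      (det_mul_self_eq_one_of_isConj_inv hA)
    have htr : (A : M₂ R).det = -1 → (A : M₂ R).trace = 0 := fun h => by
      have := det_mul_trace_eq_trace_of_isConj_inv hA
      rw [h] at this
      exact h2.mul_right_eq_zero.mp (by linear_combination -this)
    by_cases hs : IsScalarMod p (A : M₂ R)
    · have hp_nonunit : ¬ IsUnit p :=
        (mem_maximalIdeal p).mp (hp ▸ Ideal.mem_span_singleton_self p)
      have hdet1 : (A : M₂ R).det = 1 := hdet.resolve_right fun h => hp_nonunit <|
        isUnit_of_dvd_unit (dvd_det_of_isScalarMod h2 hs (htr h)) (h ▸ isUnit_one.neg)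
      obtain ⟨g, ε, hε, i, hi1, hiℓ, α, hg⟩ :=
        exists_conj_eq_smul_one_add_pow_smul_of_isScalarMod hp h2 hpℓ hs hdet1
      refine ⟨g, Or.inr (Or.inr ?_)⟩
      rcases hε with rfl | rfl
      · exact Or.inl ⟨i, hi1, hiℓ, α, by simpa using hg⟩
      · exact Or.inr ⟨i, hi1, hiℓ, α, by simpa using hg⟩
    · obtain ⟨g, hg⟩ := exists_conj_eq_companion_of_not_isScalarMod hp hs
      refine ⟨g, ?_⟩
      rw [Units.val_mul, Units.val_mul, hg]
      rcases hdet with h | h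
      · exact Or.inr (Or.inl ⟨_, by rw [h]⟩)
      · left
        rw [h, htr h]
        simp
  · rintro ⟨g, hN | ⟨β, hN⟩ | ⟨i, -, -, α, hN⟩ | ⟨i, -, -, α, hN⟩⟩ <;>
      refine isConj_inv_of_conj (g := g) ?_
    · exact isConj_inv_of_val_eq_swap hN
    · exact isConj_inv_of_val_eq_companion hN
    · exact isConj_inv_of_val_eq_smul_one_add_smul (ε := 1) (one_mul 1) (by simpa using hN)
    · exact isConj_inv_of_val_eq_smul_one_add_smul (ε := -1) (by norm_num) (by simpa using hN)

end IsLocalRing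

end CommRing

theorem Ideal.Quotient.mk_pow_span_pow_self {R : Type*} [CommRing R] (x : R) (n : ℕ) :
    Ideal.Quotient.mk (Ideal.span {x} ^ n) x ^ n = 0 := by
  rw [← map_pow, Ideal.Quotient.eq_zero_iff_mem]
  exact Ideal.pow_mem_pow (Ideal.mem_span_singleton_self x) n

section Quotient

variable {O : Type*} [CommRing O] [IsLocalRing O] {π : O}

theorem isLocalRing_quotient_span_pow (hπ : maximalIdeal O = Ideal.span {π}) {ℓ : ℕ}
    (hℓ : 1 ≤ ℓ) : IsLocalRing (O ⧸ Ideal.span {π} ^ ℓ) := by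
  have hne : Ideal.span {π} ^ ℓ ≠ ⊤ := fun h => (maximalIdeal.isMaximal O).ne_top <|
    top_le_iff.mp (hπ ▸ h ▸ Ideal.pow_le_self (Nat.one_le_iff_ne_zero.mp hℓ))
  have := Ideal.Quotient.nontrivial_iff.mpr hne
  exact IsLocalRing.of_surjective' _ Ideal.Quotient.mk_surjective

theorem maximalIdeal_quotient_span_pow (hπ : maximalIdeal O = Ideal.span {π}) {ℓ : ℕ}
    [IsLocalRing (O ⧸ Ideal.span {π} ^ ℓ)] :
    maximalIdeal (O ⧸ Ideal.span {π} ^ ℓ) = Ideal.span {Ideal.Quotient.mk _ π} := by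
  rw [← map_maximalIdeal_of_surjective _ Ideal.Quotient.mk_surjective, hπ, Ideal.map_span,
    Set.image_singleton]

theorem isUnit_two_of_odd_ringChar_residueField (hodd : Odd (ringChar (ResidueField O))) :
    IsUnit (2 : O) := by
  rw [← residue_ne_zero_iff_isUnit, map_ofNat]
  exact Ring.two_ne_zero fun h => Nat.not_odd_iff_even.mpr even_two (h ▸ hodd)

end Quotient

theorem real_classes_GL2_general
    (O : Type) [CommRing O] [IsDomain O] [IsDiscreteValuationRing O]
    (π : O) (hπ : IsLocalRing.maximalIdeal O = Ideal.span {π})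
    (hodd : Odd (ringChar (IsLocalRing.ResidueField O)))
    (ℓ : ℕ) (hℓ : 1 ≤ ℓ)
    (A : GL (Fin 2) (O ⧸ Ideal.span {π} ^ ℓ)) :
    IsConj A A⁻¹ ↔
      ∃ g : GL (Fin 2) (O ⧸ Ideal.span {π} ^ ℓ),
        -- (a)
        ((↑(g * A * g⁻¹) : Matrix (Fin 2) (Fin 2) (O ⧸ Ideal.span {π} ^ ℓ)) =
            !![0, 1; 1, 0]) ∨
        -- (b)
        (∃ β : O ⧸ Ideal.span {π} ^ ℓ,
          (↑(g * A * g⁻¹) : Matrix (Fin 2) (Fin 2) (O ⧸ Ideal.span {π} ^ ℓ)) =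
            !![0, -1; 1, β]) ∨
        -- (c)
        (∃ i : ℕ, 1 ≤ i ∧ i ≤ ℓ ∧ ∃ α : O ⧸ Ideal.span {π} ^ ℓ,
          (↑(g * A * g⁻¹) : Matrix (Fin 2) (Fin 2) (O ⧸ Ideal.span {π} ^ ℓ)) =
            1 + (Ideal.Quotient.mk (Ideal.span {π} ^ ℓ) π) ^ i •
              !![0, α; 1, (Ideal.Quotient.mk (Ideal.span {π} ^ ℓ) π) ^ i * α]) ∨
        -- (d)
        (∃ i : ℕ, 1 ≤ i ∧ i ≤ ℓ ∧ ∃ α : O ⧸ Ideal.span {π} ^ ℓ,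
          (↑(g * A * g⁻¹) : Matrix (Fin 2) (Fin 2) (O ⧸ Ideal.span {π} ^ ℓ)) =
            -1 + (Ideal.Quotient.mk (Ideal.span {π} ^ ℓ) π) ^ i •
              !![0, α; 1, -((Ideal.Quotient.mk (Ideal.span {π} ^ ℓ) π) ^ i * α)]) := by
  have := isLocalRing_quotient_span_pow hπ hℓ
  have h2 : IsUnit (2 : O ⧸ Ideal.span {π} ^ ℓ) := by
    simpa only [map_ofNat] using
      (isUnit_two_of_odd_ringChar_residueField hodd).map (Ideal.Quotient.mk (Ideal.span {π} ^ ℓ))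
  exact isConj_inv_iff_exists_conj_eq (maximalIdeal_quotient_span_pow hπ) h2
    (Ideal.Quotient.mk_pow_span_pow_self π ℓ) A

theorem real_classes_GL2
    (O : Type) [CommRing O] [IsDomain O] [IsDiscreteValuationRing O]
    [IsAdicComplete (IsLocalRing.maximalIdeal O) O]
    (π : O) (hπ : IsLocalRing.maximalIdeal O = Ideal.span {π})
    [Finite (IsLocalRing.ResidueField O)]
    (hodd : Odd (ringChar (IsLocalRing.ResidueField O)))
    (ℓ : ℕ) (hℓ : 1 ≤ ℓ)
    (A : GL (Fin 2) (O ⧸ Ideal.span {π} ^ ℓ)) :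
    IsConj A A⁻¹ ↔
      ∃ g : GL (Fin 2) (O ⧸ Ideal.span {π} ^ ℓ),
        -- (a)
        ((↑(g * A * g⁻¹) : Matrix (Fin 2) (Fin 2) (O ⧸ Ideal.span {π} ^ ℓ)) =
            !![0, 1; 1, 0]) ∨
        -- (b)
        (∃ β : O ⧸ Ideal.span {π} ^ ℓ,
          (↑(g * A * g⁻¹) : Matrix (Fin 2) (Fin 2) (O ⧸ Ideal.span {π} ^ ℓ)) =
            !![0, -1; 1, β]) ∨
        -- (c)
        (∃ i : ℕ, 1 ≤ i ∧ i ≤ ℓ ∧ ∃ α : O ⧸ Ideal.span {π} ^ ℓ,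
          (↑(g * A * g⁻¹) : Matrix (Fin 2) (Fin 2) (O ⧸ Ideal.span {π} ^ ℓ)) =
            1 + (Ideal.Quotient.mk (Ideal.span {π} ^ ℓ) π) ^ i •
              !![0, α; 1, (Ideal.Quotient.mk (Ideal.span {π} ^ ℓ) π) ^ i * α]) ∨
        -- (d)
        (∃ i : ℕ, 1 ≤ i ∧ i ≤ ℓ ∧ ∃ α : O ⧸ Ideal.span {π} ^ ℓ,
          (↑(g * A * g⁻¹) : Matrix (Fin 2) (Fin 2) (O ⧸ Ideal.span {π} ^ ℓ)) =
            -1 + (Ideal.Quotient.mk (Ideal.span {π} ^ ℓ) π) ^ i •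
              !![0, α; 1, -((Ideal.Quotient.mk (Ideal.span {π} ^ ℓ) π) ^ i * α)]) :=
  real_classes_GL2_general O π hπ hodd ℓ hℓ A
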